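/- For every n ≥ 1, the map ω is a bijection from the set of permutations of length n in Av(132, 312) onto the set of words of length n−1 over the alphabet {a, b}; moreover, for all permutations σ, π ∈ Av(132, 312), σ is contained in π if and only if σ^ω is a subword (not necessarily contiguous subsequence) of π^ω. -/

import Mathlib

/-- A permutation of length `n ≥ 1` in one-line notation: a nonempty list of
natural numbers that is a rearrangement of `1, …, n` where `n` is its length. -/
def IsPermList (l : List ℕ) : Prop := l ≠ [] ∧ l.Perm (List.range' 1 l.length)

instance (l : List ℕ) : Decidable (IsPermList l) :=
  inferInstanceAs (Decidable (l ≠ [] ∧ l.Perm (List.range' 1 l.length)))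

/-- The type of all (finite, nonempty) permutations. -/
abbrev Permu := {l : List ℕ // IsPermList l}

/-- Helper to construct explicit permutations. -/
def p (l : List ℕ) (h : IsPermList l := by decide) : Permu := ⟨l, h⟩

/-- Pattern containment: `σ` is contained in `τ` when some (not necessarily
contiguous) subsequence of `τ` is order isomorphic to `σ`. -/
def Contains (σ τ : Permu) : Prop :=
  ∃ u : List ℕ, u.Sublist τ.val ∧ u.length = σ.val.length ∧
    ∀ i j : ℕ, i < u.length → j < u.length →
      (u.getD i 0 < u.getD j 0 ↔ σ.val.getD i 0 < σ.val.getD j 0)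

/-- A pattern class: a set of permutations closed downwards under containment. -/
def IsPatternClass (A : Set Permu) : Prop :=
  ∀ σ τ : Permu, τ ∈ A → Contains σ τ → σ ∈ A

/-- `Av B` is the set of permutations containing no member of the set `B`. -/
def Av (B : Set Permu) : Set Permu := {π | ∀ β ∈ B, ¬ Contains β π}

/-- An isomorphism of pattern classes is a bijection which preserves and
reflects containment. -/
def IsIso {A B : Set Permu} (f : ↥A → ↥B) : Prop :=
  Function.Bijective f ∧
  ∀ σ τ : ↥A, Contains σ.val τ.val ↔ Contains (f σ).val (f τ).val

/-- The shadow of `τ`: the permutations of length one less that are contained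
in `τ`. -/
def shadow (τ : Permu) : Set Permu :=
  {σ : Permu | σ.val.length + 1 = τ.val.length ∧ Contains σ τ}
/-- The wedge class Av(132, 312). -/
def V : Set Permu := Av {p [1,3,2], p [3,1,2]}

/-- The map ω: for π of length n, the word c₂…cₙ over {a,b} where cᵢ = a
(encoded as ) iff π(i) > π(1), and cᵢ = b (encoded ) otherwise. -/
def omegaMap (l : List ℕ) : List Bool :=
  match l with
  | [] => []
  | x :: xs => xs.map (fun y => decide (x < y))
/-!
A permutation avoids 132 and 312 exactly when it is a *wedge*: for every subsequence `x y z`,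
`y < z ↔ x < z`, i.e. every entry after the first is a new maximum or a new minimum. In a wedge
the comparison of two entries is decided by the letter of the later one in `π^ω`, so `π^ω`
determines the order type of `π`, hence `π` itself; and every word is realised by appending new
maxima (letter `a`) and new minima (letter `b`). A subsequence of a wedge compares its later
entries with its own first entry exactly as `π` compares them with `π(1)`, so containment gives a
subword of `π^ω`; conversely a subword of `π^ω` is realised by `π(1)` followed by the entries of
`π` carrying the chosen letters.
-/

open scoped List

def OrderIsomorphic (u v : List ℕ) : Prop :=
  u.length = v.length ∧ ∀ i j, i < u.length → j < u.length →
    (u.getD i 0 < u.getD j 0 ↔ v.getD i 0 < v.getD j 0)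

def IsWedge (l : List ℕ) : Prop :=
  ∀ x y z, [x, y, z] <+ l → (y < z ↔ x < z)

theorem IsPermList.nodup {l : List ℕ} (h : IsPermList l) : l.Nodup :=
  h.2.nodup_iff.2 List.nodup_range'

theorem IsPermList.mem_iff {l : List ℕ} (h : IsPermList l) {x : ℕ} :
    x ∈ l ↔ 1 ≤ x ∧ x ≤ l.length := by
  rw [h.2.mem_iff, List.mem_range'_1]
  omega

theorem List.Nodup.getD_ne_getD {l : List ℕ} (h : l.Nodup) {i j : ℕ} (hi : i < l.length)
    (hj : j < l.length) (hij : i ≠ j) : l.getD i 0 ≠ l.getD j 0 := by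
  rw [List.getD_eq_getElem _ _ hi, List.getD_eq_getElem _ _ hj]
  exact fun h' => hij (h.getElem_inj_iff.mp h')

theorem countP_range'_lt (n v : ℕ) :
    (List.range' 1 n).countP (fun x => decide (x < v)) = min n (v - 1) := by
  induction n with
  | zero => simp
  | succ n ih =>
    rw [List.range'_concat, List.countP_append, ih, List.countP_singleton]
    simp only [Nat.one_mul, decide_eq_true_eq]
    split <;> omega

theorem IsPermList.getD_eq_countP_lt {l : List ℕ} (h : IsPermList l) {j : ℕ}
    (hj : j < l.length) :
    l.getD j 0 = (List.range l.length).countP (fun i => l.getD i 0 < l.getD j 0) + 1 := by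
  have hmem : l.getD j 0 ∈ l := by
    rw [List.getD_eq_getElem _ _ hj]; exact List.getElem_mem hj
  have hmap : (List.range l.length).map (l.getD · 0) = l :=
    List.ext_getElem (by simp) fun i _ hi => by simp [List.getElem?_eq_getElem hi]
  have hcount := h.2.countP_eq (fun x => decide (x < l.getD j 0))
  rw [countP_range'_lt, ← hmap, List.countP_map, hmap] at hcount
  have := h.mem_iff.1 hmem
  simp only [Function.comp_def] at hcount
  omega

theorem IsPermList.eq_of_orderIsomorphic {u v : List ℕ} (hu : IsPermList u) (hv : IsPermList v)
    (h : OrderIsomorphic u v) : u = v := by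
  refine List.ext_getElem h.1 fun j hju hjv => ?_
  rw [← List.getD_eq_getElem u 0 hju, ← List.getD_eq_getElem v 0 hjv,
    hu.getD_eq_countP_lt hju, hv.getD_eq_countP_lt hjv, ← h.1]
  congr 1
  exact List.countP_congr fun i hi => by
    simp only [decide_eq_true_eq, h.2 i j (List.mem_range.1 hi) hju]

theorem orderIsomorphic_of_lt {u v : List ℕ} (hu : u.Nodup) (hv : v.Nodup)
    (hlen : u.length = v.length)
    (h : ∀ i j, i < j → j < u.length → (u.getD i 0 < u.getD j 0 ↔ v.getD i 0 < v.getD j 0)) :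
    OrderIsomorphic u v := by
  refine ⟨hlen, fun i j hi hj => ?_⟩
  rcases lt_trichotomy i j with hij | rfl | hji
  · exact h i j hij hj
  · simp
  · have hu' := hu.getD_ne_getD hi hj hji.ne'
    have hv' := hv.getD_ne_getD (hlen ▸ hi) (hlen ▸ hj) hji.ne'
    have := h j i hji hi
    omega

theorem orderIsomorphic_triple_iff_132 {x y z : ℕ} :
    OrderIsomorphic [x, y, z] [1, 3, 2] ↔ x < z ∧ z < y := by
  constructor
  · rintro ⟨-, h⟩
    exact ⟨(h 0 2 (by simp) (by simp)).2 (by simp), (h 2 1 (by simp) (by simp)).2 (by simp)⟩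
  · rintro ⟨hxz, hzy⟩
    refine ⟨rfl, fun i j hi hj => ?_⟩
    simp only [List.length_cons, List.length_nil] at hi hj
    interval_cases i <;> interval_cases j <;> simp <;> omega

theorem orderIsomorphic_triple_iff_312 {x y z : ℕ} :
    OrderIsomorphic [x, y, z] [3, 1, 2] ↔ y < z ∧ z < x := by
  constructor
  · rintro ⟨-, h⟩
    exact ⟨(h 1 2 (by simp) (by simp)).2 (by simp), (h 2 0 (by simp) (by simp)).2 (by simp)⟩
  · rintro ⟨hyz, hzx⟩
    refine ⟨rfl, fun i j hi hj => ?_⟩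
    simp only [List.length_cons, List.length_nil] at hi hj
    interval_cases i <;> interval_cases j <;> simp <;> omega

theorem contains_of_length_three_iff {β π : Permu} (hβ : β.val.length = 3) :
    Contains β π ↔ ∃ x y z, [x, y, z] <+ π.val ∧ OrderIsomorphic [x, y, z] β.val := by
  constructor
  · rintro ⟨u, hu, hiso⟩
    obtain ⟨x, y, z, rfl⟩ := List.length_eq_three.1 (hiso.1.trans hβ)
    exact ⟨x, y, z, hu, hiso⟩
  · rintro ⟨x, y, z, hu, hiso⟩
    exact ⟨_, hu, hiso⟩

theorem mem_V_iff {π : Permu} : π ∈ V ↔ IsWedge π.val := by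
  have h132 : Contains (p [1,3,2]) π ↔ ∃ x y z, [x, y, z] <+ π.val ∧ x < z ∧ z < y := by
    rw [contains_of_length_three_iff rfl]
    exact exists₃_congr fun x y z => and_congr_right' orderIsomorphic_triple_iff_132
  have h312 : Contains (p [3,1,2]) π ↔ ∃ x y z, [x, y, z] <+ π.val ∧ y < z ∧ z < x := by
    rw [contains_of_length_three_iff rfl]
    exact exists₃_congr fun x y z => and_congr_right' orderIsomorphic_triple_iff_312
  have hV : π ∈ V ↔ ¬ Contains (p [1,3,2]) π ∧ ¬ Contains (p [3,1,2]) π := by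
    simp [V, Av]
  rw [hV, h132, h312]
  constructor
  · rintro ⟨no132, no312⟩ x y z hxyz
    have hnd : [x, y, z].Nodup := π.2.nodup.sublist hxyz
    simp only [List.nodup_cons, List.mem_cons, List.not_mem_nil] at hnd
    have := fun h => no132 ⟨x, y, z, hxyz, h⟩
    have := fun h => no312 ⟨x, y, z, hxyz, h⟩
    grind
  · intro hw
    refine ⟨fun ⟨x, y, z, hxyz, h⟩ => ?_, fun ⟨x, y, z, hxyz, h⟩ => ?_⟩ <;>
    · have := hw x y z hxyz
      omega

theorem IsWedge.sublist {l l' : List ℕ} (hw : IsWedge l') (h : l <+ l') : IsWedge l :=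
  fun x y z hxyz => hw x y z (hxyz.trans h)

theorem IsWedge.pairwise {a : ℕ} {t : List ℕ} (hw : IsWedge (a :: t)) :
    t.Pairwise (fun y z => y < z ↔ a < z) :=
  List.pairwise_iff_forall_sublist.2 fun hyz => hw _ _ _ (hyz.cons_cons a)

theorem IsWedge.getD_lt_getD_iff {a : ℕ} {t : List ℕ} (hw : IsWedge (a :: t)) {i j : ℕ}
    (hij : i < j) (hj : j < t.length + 1) :
    (a :: t).getD i 0 < (a :: t).getD j 0 ↔ a < t.getD (j - 1) 0 := by
  obtain ⟨m, rfl⟩ : ∃ m, j = m + 1 := ⟨j - 1, by omega⟩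
  rcases i with _ | k
  · rfl
  · simp only [List.getD_cons_succ, Nat.add_sub_cancel]
    rw [List.getD_eq_getElem _ _ (by omega), List.getD_eq_getElem _ _ (by omega)]
    exact List.pairwise_iff_getElem.1 hw.pairwise k m _ _ (by omega)

theorem orderIsomorphic_of_omegaMap_eq {a b : ℕ} {t s : List ℕ} (hu : IsWedge (a :: t))
    (hv : IsWedge (b :: s)) (hnu : (a :: t).Nodup) (hnv : (b :: s).Nodup)
    (h : omegaMap (a :: t) = omegaMap (b :: s)) : OrderIsomorphic (a :: t) (b :: s) := by
  simp only [omegaMap] at h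
  have hlen : t.length = s.length := by simpa using congrArg List.length h
  refine orderIsomorphic_of_lt hnu hnv (by simp [hlen]) fun i j hij hj => ?_
  simp only [List.length_cons] at hj
  rw [hu.getD_lt_getD_iff hij hj, hv.getD_lt_getD_iff hij (hlen ▸ hj),
    List.getD_eq_getElem _ _ (by omega), List.getD_eq_getElem _ _ (by omega)]
  have := congrArg (·[j - 1]?) h
  simpa [List.getElem?_eq_getElem (show j - 1 < t.length by omega),
    List.getElem?_eq_getElem (show j - 1 < s.length by omega)] using this

theorem omegaMap_length (l : List ℕ) : (omegaMap l).length = l.length - 1 := by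
  cases l <;> simp [omegaMap]

theorem omegaMap_eq_of_orderIsomorphic {u v : List ℕ} (h : OrderIsomorphic u v) :
    omegaMap u = omegaMap v := by
  obtain ⟨hlen, h⟩ := h
  match u, v, hlen with
  | [], [], _ => rfl
  | a :: t, b :: s, hlen =>
    simp only [List.length_cons, Nat.add_right_cancel_iff] at hlen
    refine List.ext_getElem (by simp [omegaMap, hlen]) fun k hk _ => ?_
    simp only [omegaMap, List.length_map] at hk ⊢
    have := h 0 (k + 1) (by simp) (by simp; omega)
    simp only [List.getD_cons_zero, List.getD_cons_succ, List.getD_eq_getElem _ _ hk,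
      List.getD_eq_getElem _ _ (hlen ▸ hk)] at this
    simpa using this

theorem IsWedge.omegaMap_sublist {u l : List ℕ} (hw : IsWedge l) (h : u <+ l) :
    omegaMap u <+ omegaMap l := by
  match l, u, h with
  | [], _, h => simp [List.sublist_nil.1 h]
  | a :: t, [], _ => simp [omegaMap]
  | a :: t, y :: r, h =>
    rcases List.sublist_cons_iff.1 h with h | ⟨r, ⟨⟩, h⟩
    · have hmap : r.map (fun z => decide (y < z)) = r.map (fun z => decide (a < z)) :=
        List.map_congr_left fun z hz => decide_eq_decide.2 <|
          hw a y z ((((List.singleton_sublist.2 hz).cons_cons y).trans h).cons_cons a)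
      show r.map _ <+ t.map _
      exact hmap ▸ ((r.sublist_cons_self y).trans h).map _
    · exact h.map _

theorem IsWedge.map_of_strictMono {l : List ℕ} {f : ℕ → ℕ} (hw : IsWedge l) (hf : StrictMono f) :
    IsWedge (l.map f) := by
  intro x y z h
  obtain ⟨l', hl', heq⟩ := List.sublist_map_iff.1 h
  obtain ⟨x', y', z', rfl⟩ := List.length_eq_three.1 (by simpa using congrArg List.length heq.symm)
  simp only [List.map_cons, List.map_nil, List.cons.injEq, and_true] at heq
  obtain ⟨rfl, rfl, rfl⟩ := heq
  simpa only [hf.lt_iff_lt] using hw x' y' z' hl'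

theorem IsWedge.append_singleton {l : List ℕ} {v : ℕ} (hw : IsWedge l)
    (hv : ∀ x ∈ l, ∀ y ∈ l, (x < v ↔ y < v)) : IsWedge (l ++ [v]) := by
  intro x y z h
  obtain ⟨l₁, l₂, heq, h₁, h₂⟩ := List.sublist_append_iff.1 h
  rcases List.sublist_singleton.1 h₂ with rfl | rfl
  · exact hw x y z (by simpa [heq] using h₁)
  · obtain ⟨rfl, hz⟩ := List.append_inj' (show [x, y] ++ [z] = l₁ ++ [v] from heq) rfl
    obtain rfl : z = v := by simpa using hz
    exact hv y (h₁.subset (by simp)) x (h₁.subset (by simp))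

-- Recursion on the reversed word: each letter appends a new maximum (`true`) or a new minimum.
def wedgeOfRev : List Bool → List ℕ
  | [] => [1]
  | true :: w => wedgeOfRev w ++ [w.length + 2]
  | false :: w => (wedgeOfRev w).map (· + 1) ++ [1]

theorem wedgeOfRev_length (w : List Bool) : (wedgeOfRev w).length = w.length + 1 := by
  induction w with
  | nil => rfl
  | cons c w ih => cases c <;> simp [wedgeOfRev, ih]

theorem isPermList_wedgeOfRev (w : List Bool) : IsPermList (wedgeOfRev w) := by
  refine ⟨List.ne_nil_of_length_eq_add_one (wedgeOfRev_length w), ?_⟩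
  rw [wedgeOfRev_length]
  induction w with
  | nil => rfl
  | cons c w ih =>
    cases c
    · rw [wedgeOfRev, List.range'_succ, List.range'_succ_left]
      exact (List.perm_append_singleton _ _).trans ((ih.map _).cons _)
    · rw [wedgeOfRev, List.length_cons, List.range'_concat, Nat.one_mul, Nat.add_comm 1]
      exact ih.append_right _

theorem isWedge_wedgeOfRev (w : List Bool) : IsWedge (wedgeOfRev w) := by
  induction w with
  | nil => intro x y z h; simpa [wedgeOfRev] using h.length_le
  | cons c w ih =>
    cases c
    · exact (ih.map_of_strictMono fun _ _ => Nat.succ_lt_succ).append_singleton (by simp)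
    · refine ih.append_singleton fun x hx y hy => ?_
      have hx := (isPermList_wedgeOfRev w).mem_iff.1 hx
      have hy := (isPermList_wedgeOfRev w).mem_iff.1 hy
      rw [wedgeOfRev_length] at hx hy
      omega

theorem omegaMap_append_singleton {a v : ℕ} {t : List ℕ} :
    omegaMap (a :: t ++ [v]) = omegaMap (a :: t) ++ [decide (a < v)] := by
  simp [omegaMap]

theorem omegaMap_map_add_one (l : List ℕ) : omegaMap (l.map (· + 1)) = omegaMap l := by
  cases l <;> simp [omegaMap, Function.comp_def]

theorem omegaMap_wedgeOfRev (w : List Bool) : omegaMap (wedgeOfRev w) = w.reverse := by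
  induction w with
  | nil => rfl
  | cons c w ih =>
    obtain ⟨a, t, hat⟩ := List.exists_cons_of_ne_nil (isPermList_wedgeOfRev w).1
    have ha := (isPermList_wedgeOfRev w).mem_iff.1 (hat ▸ List.mem_cons_self)
    rw [wedgeOfRev_length] at ha
    cases c
    · rw [wedgeOfRev, hat, List.map_cons, omegaMap_append_singleton,
        show (a + 1) :: t.map (· + 1) = (a :: t).map (· + 1) from rfl, omegaMap_map_add_one,
        ← hat, ih]
      simp
    · rw [wedgeOfRev, hat, omegaMap_append_singleton, ← hat, ih]
      simp only [List.reverse_cons, decide_eq_true (by omega : a < w.length + 2)]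

theorem eq_of_omegaMap_eq {σ π : Permu} (hσ : IsWedge σ.val) (hπ : IsWedge π.val)
    (h : omegaMap σ.val = omegaMap π.val) : σ = π := by
  obtain ⟨_ | ⟨b, s⟩, hσp⟩ := σ
  · exact absurd rfl hσp.1
  obtain ⟨_ | ⟨a, t⟩, hπp⟩ := π
  · exact absurd rfl hπp.1
  exact Subtype.ext <| hσp.eq_of_orderIsomorphic hπp <|
    orderIsomorphic_of_omegaMap_eq hσ hπ hσp.nodup hπp.nodup h

theorem contains_iff_omegaMap_sublist {σ π : Permu} (hσ : IsWedge σ.val) (hπ : IsWedge π.val) :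
    Contains σ π ↔ omegaMap σ.val <+ omegaMap π.val := by
  refine ⟨fun ⟨u, hu, hiso⟩ => omegaMap_eq_of_orderIsomorphic hiso ▸ hπ.omegaMap_sublist hu,
    fun h => ?_⟩
  obtain ⟨_ | ⟨b, s⟩, hσp⟩ := σ
  · exact absurd rfl hσp.1
  obtain ⟨_ | ⟨a, t⟩, hπp⟩ := π
  · exact absurd rfl hπp.1
  obtain ⟨t', ht', heq⟩ := List.sublist_map_iff.1 h
  have hsub : a :: t' <+ a :: t := ht'.cons_cons a
  exact ⟨a :: t', hsub, orderIsomorphic_of_omegaMap_eq (hπ.sublist hsub) hσ (hπp.nodup.sublist hsub)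
    hσp.nodup heq.symm⟩

theorem exists_omegaMap_eq (w : List Bool) :
    ∃ π : Permu, IsWedge π.val ∧ π.val.length = w.length + 1 ∧ omegaMap π.val = w :=
  ⟨⟨wedgeOfRev w.reverse, isPermList_wedgeOfRev _⟩, isWedge_wedgeOfRev _,
    by simp [wedgeOfRev_length], by simp [omegaMap_wedgeOfRev]⟩

theorem statement_3 :
    (∀ n : ℕ, 1 ≤ n →
      Set.BijOn (fun π : Permu => omegaMap π.val)
        {π : Permu | π ∈ V ∧ π.val.length = n}
        {w : List Bool | w.length = n - 1}) ∧
    (∀ σ π : Permu, σ ∈ V → π ∈ V →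
      (Contains σ π ↔ (omegaMap σ.val).Sublist (omegaMap π.val))) := by
  refine ⟨fun n hn => ⟨?_, ?_, ?_⟩, fun σ π hσ hπ =>
    contains_iff_omegaMap_sublist (mem_V_iff.1 hσ) (mem_V_iff.1 hπ)⟩
  · rintro π ⟨-, rfl⟩
    exact omegaMap_length _
  · rintro σ ⟨hσ, -⟩ π ⟨hπ, -⟩ h
    exact eq_of_omegaMap_eq (mem_V_iff.1 hσ) (mem_V_iff.1 hπ) h
  · rintro w (hw : w.length = n - 1)
    obtain ⟨π, hπ, hlen, rfl⟩ := exists_omegaMap_eq w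
    exact ⟨π, ⟨mem_V_iff.2 hπ, by omega⟩, rfl⟩
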